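/- arXiv:1708.09125 — 8 statements merged into one kernel-verified Lean document; each statement's English description precedes it below -/
import Mathlib

section
/- Assume the sets E₊(A*) and E₋(A*) are finite with card E₊(A*) + card E₋(A*) = n + 2. Then A* is a global minimizer of Ψ over ℝ^{n+1} if and only if the convex hulls of G₊(A*) and G₋(A*) in ℝ^{n+1} have nonempty intersection. -/
/-- The modelling function `L(A,x) = a₀ + ∑_{i=1}^n aᵢ gᵢ(x)`. -/
noncomputable def modelFun {d n : ℕ} (g : Fin n → (Fin d → ℝ) → ℝ)
    (A : Fin (n + 1) → ℝ) (x : Fin d → ℝ) : ℝ :=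
  A 0 + ∑ i : Fin n, A i.succ * g i x

/-- The uniform approximation error `Ψ(A) = sup_{x ∈ Q} |f(x) − L(A,x)|`. -/
noncomputable def uniformError {d n : ℕ} (Q : Set (Fin d → ℝ))
    (f : (Fin d → ℝ) → ℝ) (g : Fin n → (Fin d → ℝ) → ℝ)
    (A : Fin (n + 1) → ℝ) : ℝ :=
  sSup ((fun x => |f x - modelFun g A x|) '' Q)

/-- The set of maximal positive deviation points. -/
def Eplus {d n : ℕ} (Q : Set (Fin d → ℝ)) (f : (Fin d → ℝ) → ℝ)
    (g : Fin n → (Fin d → ℝ) → ℝ) (A : Fin (n + 1) → ℝ) : Set (Fin d → ℝ) :=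
  {x ∈ Q | f x - modelFun g A x = uniformError Q f g A}

/-- The set of maximal negative deviation points. -/
def Eminus {d n : ℕ} (Q : Set (Fin d → ℝ)) (f : (Fin d → ℝ) → ℝ)
    (g : Fin n → (Fin d → ℝ) → ℝ) (A : Fin (n + 1) → ℝ) : Set (Fin d → ℝ) :=
  {x ∈ Q | modelFun g A x - f x = uniformError Q f g A}

/-- The vector `(1, g₁(x), …, gₙ(x)) ∈ ℝ^{n+1}`. -/
def gVec {d n : ℕ} (g : Fin n → (Fin d → ℝ) → ℝ) (x : Fin d → ℝ) :
    Fin (n + 1) → ℝ :=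
  Fin.cons 1 (fun i => g i x)

/-- `G₊(A) = {(1,g₁(x),…,gₙ(x)) : x ∈ E₊(A)}`. -/
def Gplus {d n : ℕ} (Q : Set (Fin d → ℝ)) (f : (Fin d → ℝ) → ℝ)
    (g : Fin n → (Fin d → ℝ) → ℝ) (A : Fin (n + 1) → ℝ) :
    Set (Fin (n + 1) → ℝ) :=
  gVec g '' Eplus Q f g A

/-- `G₋(A) = {(1,g₁(x),…,gₙ(x)) : x ∈ E₋(A)}`. -/
def Gminus {d n : ℕ} (Q : Set (Fin d → ℝ)) (f : (Fin d → ℝ) → ℝ)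
    (g : Fin n → (Fin d → ℝ) → ℝ) (A : Fin (n + 1) → ℝ) :
    Set (Fin (n + 1) → ℝ) :=
  gVec g '' Eminus Q f g A

/-!
If the hulls of `G₊(A*)` and `G₋(A*)` share a point `p`, then for every `A` the linear form
`w ↦ (A - A*) ⬝ᵥ w` is at least `Ψ(A*) - Ψ(A)` on `G₊(A*)` and at most `Ψ(A) - Ψ(A*)` on
`G₋(A*)`; evaluating at `p` gives `Ψ(A*) ≤ Ψ(A)`.

If the hulls are disjoint, they are strictly separated by an affine hyperplane. Since every point of
`G₊ ∪ G₋` has first coordinate `1`, the separating affine function is `x ↦ L(B, x)` for some `B`,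
positive on `E₊(A*)` and negative on `E₋(A*)`. Moving `A*` a little in the direction `B` lowers the
deviation near the extreme points, while elsewhere the deviation has room to spare by compactness,
so `Ψ(A* + εB) < Ψ(A*)`.
-/

section Perturbation

variable {X : Type*} [TopologicalSpace X] {K : Set X} {h φ : X → ℝ} {Ψ : ℝ}

theorem IsCompact.exists_pos_forall_pos_of_sub_lt (hK : IsCompact K) (hh : Continuous h)
    (hφ : Continuous φ) (hle : ∀ x ∈ K, h x ≤ Ψ) (hpos : ∀ x ∈ K, h x = Ψ → 0 < φ x) :
    ∃ δ > 0, ∀ x ∈ K, Ψ - δ < h x → 0 < φ x := by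
  have hgap : ∀ x ∈ K ∩ {x | φ x ≤ 0}, 0 < Ψ - h x := fun x ⟨hxK, hx⟩ =>
    sub_pos.2 ((hle x hxK).lt_of_ne fun heq => (hpos x hxK heq).not_ge hx)
  obtain ⟨δ, hδ, hbound⟩ := (hK.inter_right (isClosed_le hφ continuous_const)).exists_forall_le'
    (continuous_const.sub hh).continuousOn hgap
  refine ⟨δ, hδ, fun x hxK hx => ?_⟩
  by_contra hφx
  have : δ ≤ Ψ - h x := hbound x ⟨hxK, not_lt.1 hφx⟩
  linarith

theorem IsCompact.exists_pos_forall_abs_sub_mul_lt (hK : IsCompact K) (hh : Continuous h)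
    (hφ : Continuous φ) (hΨ : 0 < Ψ) (hle : ∀ x ∈ K, |h x| ≤ Ψ)
    (hpos : ∀ x ∈ K, h x = Ψ → 0 < φ x) (hneg : ∀ x ∈ K, h x = -Ψ → φ x < 0) :
    ∃ ε > 0, ∀ x ∈ K, |h x - ε * φ x| < Ψ := by
  obtain ⟨δp, hδp, hδpφ⟩ := hK.exists_pos_forall_pos_of_sub_lt hh hφ
    (fun x hx => (abs_le.1 (hle x hx)).2) hpos
  obtain ⟨δm, hδm, hδmφ⟩ := hK.exists_pos_forall_pos_of_sub_lt hh.neg hφ.neg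
    (fun x hx => neg_le.1 (abs_le.1 (hle x hx)).1)
    (fun x hx hx' => neg_pos.2 (hneg x hx (neg_eq_iff_eq_neg.1 hx')))
  obtain ⟨M, hM⟩ := hK.exists_bound_of_continuousOn hφ.continuousOn
  set δ := min (min δp δm) Ψ
  have hδ : 0 < δ := lt_min (lt_min hδp hδm) hΨ
  refine ⟨δ / (|M| + 1), by positivity, fun x hx => ?_⟩
  set ε := δ / (|M| + 1)
  have hε : 0 < ε := by positivity
  have hεφ : |ε * φ x| < δ := calc
    |ε * φ x| = ε * |φ x| := by rw [abs_mul, abs_of_pos hε]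
    _ ≤ ε * |M| :=
      mul_le_mul_of_nonneg_left ((Real.norm_eq_abs _ ▸ hM x hx).trans (le_abs_self M)) hε.le
    _ < ε * (|M| + 1) := by linarith [mul_pos hε one_pos]
    _ = δ := div_mul_cancel₀ δ (by positivity)
  have hδp' : δ ≤ δp := (min_le_left _ _).trans (min_le_left _ _)
  have hδm' : δ ≤ δm := (min_le_left _ _).trans (min_le_right _ _)
  have hδΨ : δ ≤ Ψ := min_le_right _ _
  obtain ⟨hlo, hhi⟩ := abs_le.1 (hle x hx)
  obtain ⟨hεlo, hεhi⟩ := abs_lt.1 hεφ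
  rw [abs_lt]
  by_cases htop : Ψ - δ < h x
  · have := mul_pos hε (hδpφ x hx (by linarith))
    constructor <;> linarith
  by_cases hbot : Ψ - δ < -h x
  · have : 0 < ε * -φ x := mul_pos hε (hδmφ x hx (show Ψ - δm < -h x by linarith))
    constructor <;> linarith
  constructor <;> linarith

end Perturbation

theorem exists_dotProduct_separation {ι : Type*} [Fintype ι] {S T : Set (ι → ℝ)}
    (hS : S.Finite) (hT : T.Finite) (hST : Disjoint (convexHull ℝ S) (convexHull ℝ T)) :
    ∃ (w : ι → ℝ) (c : ℝ), (∀ p ∈ S, c < w ⬝ᵥ p) ∧ ∀ q ∈ T, w ⬝ᵥ q < c := by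
  classical
  obtain ⟨F, u, v, hFT, huv, hFS⟩ := geometric_hahn_banach_compact_closed
    (convex_convexHull ℝ T) (hT.isCompact_convexHull (𝕜 := ℝ)) (convex_convexHull ℝ S)
    (hS.isCompact_convexHull (𝕜 := ℝ)).isClosed hST.symm
  have hw : ∀ p, (dotProductEquiv ℝ ι).symm F ⬝ᵥ p = F p := fun p =>
    LinearMap.congr_fun ((dotProductEquiv ℝ ι).apply_symm_apply F) p
  refine ⟨(dotProductEquiv ℝ ι).symm F, u, fun p hp => ?_, fun q hq => ?_⟩
  · rw [hw]; linarith [hFS p (subset_convexHull ℝ S hp)]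
  · rw [hw]; exact hFT q (subset_convexHull ℝ T hq)

theorem le_of_convexHull_inter_nonempty {E : Type*} [AddCommGroup E] [Module ℝ E]
    {S T : Set E} (hST : (convexHull ℝ S ∩ convexHull ℝ T).Nonempty) (ℓ : E →ₗ[ℝ] ℝ) {a b : ℝ}
    (hS : ∀ p ∈ S, a ≤ ℓ p) (hT : ∀ q ∈ T, ℓ q ≤ b) : a ≤ b := by
  obtain ⟨p, hpS, hpT⟩ := hST
  have ha : a ≤ ℓ p := convexHull_min hS (convex_halfSpace_ge ℓ.isLinear a) hpS
  have hb : ℓ p ≤ b := convexHull_min hT (convex_halfSpace_le ℓ.isLinear b) hpT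
  exact ha.trans hb

section UniformApproximation

variable {d n : ℕ} {Q : Set (Fin d → ℝ)} {f : (Fin d → ℝ) → ℝ} {g : Fin n → (Fin d → ℝ) → ℝ}
  {A B : Fin (n + 1) → ℝ}

theorem gVec_zero (x : Fin d → ℝ) : gVec g x 0 = 1 := rfl

theorem dotProduct_gVec (A : Fin (n + 1) → ℝ) (x : Fin d → ℝ) :
    A ⬝ᵥ gVec g x = modelFun g A x := by
  simp [dotProduct, Fin.sum_univ_succ, gVec, modelFun]

theorem continuous_modelFun (hg : ∀ i, Continuous (g i)) (A : Fin (n + 1) → ℝ) :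
    Continuous (modelFun g A) :=
  continuous_const.add (continuous_finsetSum _ fun i _ => continuous_const.mul (hg i))

theorem continuous_sub_modelFun (hf : Continuous f) (hg : ∀ i, Continuous (g i))
    (A : Fin (n + 1) → ℝ) : Continuous fun x => f x - modelFun g A x :=
  hf.sub (continuous_modelFun hg A)

theorem abs_sub_modelFun_le_uniformError (hQc : IsCompact Q) (hf : Continuous f)
    (hg : ∀ i, Continuous (g i)) (A : Fin (n + 1) → ℝ) {x : Fin d → ℝ} (hx : x ∈ Q) :
    |f x - modelFun g A x| ≤ uniformError Q f g A :=
  le_csSup (hQc.image (continuous_sub_modelFun hf hg A).abs).bddAbove ⟨x, hx, rfl⟩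

theorem exists_abs_sub_modelFun_eq_uniformError (hQne : Q.Nonempty) (hQc : IsCompact Q)
    (hf : Continuous f) (hg : ∀ i, Continuous (g i)) (A : Fin (n + 1) → ℝ) :
    ∃ x ∈ Q, |f x - modelFun g A x| = uniformError Q f g A := by
  obtain ⟨x, hx, hsup⟩ :=
    hQc.exists_sSup_image_eq hQne (continuous_sub_modelFun hf hg A).abs.continuousOn
  exact ⟨x, hx, hsup.symm⟩

theorem uniformError_lt_of_forall_abs_lt (hQne : Q.Nonempty) (hQc : IsCompact Q)
    (hf : Continuous f) (hg : ∀ i, Continuous (g i)) {r : ℝ}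
    (h : ∀ x ∈ Q, |f x - modelFun g A x| < r) : uniformError Q f g A < r :=
  (hQc.sSup_lt_iff_of_continuous hQne (continuous_sub_modelFun hf hg A).abs.continuousOn r).2 h

theorem uniformError_pos_of_disjoint (hQne : Q.Nonempty) (hQc : IsCompact Q)
    (hf : Continuous f) (hg : ∀ i, Continuous (g i))
    (hdisj : Disjoint (Eplus Q f g A) (Eminus Q f g A)) : 0 < uniformError Q f g A := by
  obtain ⟨x, hxQ, hx⟩ := exists_abs_sub_modelFun_eq_uniformError hQne hQc hf hg A
  refine (hx ▸ abs_nonneg _).lt_of_ne fun hzero => ?_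
  have hres : f x - modelFun g A x = 0 := abs_eq_zero.1 (hx.trans hzero.symm)
  exact hdisj.ne_of_mem (⟨hxQ, by linarith⟩ : x ∈ Eplus Q f g A)
    (⟨hxQ, by linarith⟩ : x ∈ Eminus Q f g A) rfl

theorem exists_uniformError_lt (hQne : Q.Nonempty) (hQc : IsCompact Q) (hf : Continuous f)
    (hg : ∀ i, Continuous (g i)) (hΨ : 0 < uniformError Q f g A)
    (hBplus : ∀ x ∈ Eplus Q f g A, 0 < modelFun g B x)
    (hBminus : ∀ x ∈ Eminus Q f g A, modelFun g B x < 0) :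
    ∃ A', uniformError Q f g A' < uniformError Q f g A := by
  obtain ⟨ε, -, hε⟩ := hQc.exists_pos_forall_abs_sub_mul_lt (continuous_sub_modelFun hf hg A)
    (continuous_modelFun hg B) hΨ (fun x hx => abs_sub_modelFun_le_uniformError hQc hf hg A hx)
    (fun x hx hx' => hBplus x ⟨hx, hx'⟩) (fun x hx hx' => hBminus x ⟨hx, by linarith⟩)
  refine ⟨A + ε • B, uniformError_lt_of_forall_abs_lt hQne hQc hf hg fun x hx => ?_⟩
  have hL : modelFun g (A + ε • B) x = modelFun g A x + ε * modelFun g B x := by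
    simp only [← dotProduct_gVec, add_dotProduct, smul_dotProduct, smul_eq_mul]
  rw [hL, ← sub_sub]
  exact hε x hx

theorem uniformError_sub_le_of_mem_Eplus (hQc : IsCompact Q) (hf : Continuous f)
    (hg : ∀ i, Continuous (g i)) (A' : Fin (n + 1) → ℝ) {x : Fin d → ℝ}
    (hx : x ∈ Eplus Q f g A) :
    uniformError Q f g A - uniformError Q f g A' ≤ modelFun g A' x - modelFun g A x := by
  have := (abs_le.1 (abs_sub_modelFun_le_uniformError hQc hf hg A' hx.1)).2
  linarith [hx.2]

theorem sub_le_uniformError_sub_of_mem_Eminus (hQc : IsCompact Q) (hf : Continuous f)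
    (hg : ∀ i, Continuous (g i)) (A' : Fin (n + 1) → ℝ) {x : Fin d → ℝ}
    (hx : x ∈ Eminus Q f g A) :
    modelFun g A' x - modelFun g A x ≤ uniformError Q f g A' - uniformError Q f g A := by
  have := (abs_le.1 (abs_sub_modelFun_le_uniformError hQc hf hg A' hx.1)).1
  linarith [hx.2]

end UniformApproximation

theorem optimality_iff_convexHulls_intersect_general
    (d n : ℕ)
    (Q : Set (Fin d → ℝ)) (hQne : Q.Nonempty) (hQc : IsCompact Q)
    (f : (Fin d → ℝ) → ℝ) (hf : Continuous f)
    (g : Fin n → (Fin d → ℝ) → ℝ) (hg : ∀ i, Continuous (g i))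
    (Astar : Fin (n + 1) → ℝ)
    (hfinp : (Eplus Q f g Astar).Finite) (hfinm : (Eminus Q f g Astar).Finite) :
    (∀ A : Fin (n + 1) → ℝ, uniformError Q f g Astar ≤ uniformError Q f g A) ↔
      (convexHull ℝ (Gplus Q f g Astar) ∩ convexHull ℝ (Gminus Q f g Astar)).Nonempty := by
  constructor
  · intro hopt
    by_contra hmeet
    rw [Set.not_nonempty_iff_eq_empty, ← Set.disjoint_iff_inter_eq_empty] at hmeet
    have hΨ := uniformError_pos_of_disjoint hQne hQc hf hg <| Set.disjoint_left.2 fun x hp hm =>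
      hmeet.ne_of_mem (subset_convexHull ℝ _ ⟨x, hp, rfl⟩) (subset_convexHull ℝ _ ⟨x, hm, rfl⟩) rfl
    obtain ⟨w, c, hwp, hwm⟩ := exists_dotProduct_separation (hfinp.image _) (hfinm.image _) hmeet
    have hL : ∀ x, modelFun g (w - Pi.single 0 c) x = w ⬝ᵥ gVec g x - c := fun x => by
      rw [← dotProduct_gVec, sub_dotProduct, single_dotProduct, gVec_zero, mul_one]
    obtain ⟨A, hA⟩ := exists_uniformError_lt hQne hQc hf hg hΨ
      (fun x hx => by rw [hL, sub_pos]; exact hwp _ ⟨x, hx, rfl⟩)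
      (fun x hx => by rw [hL, sub_neg]; exact hwm _ ⟨x, hx, rfl⟩)
    exact (hopt A).not_gt hA
  · intro hmeet A
    have hℓ : ∀ x, dotProductEquiv ℝ _ (A - Astar) (gVec g x) =
        modelFun g A x - modelFun g Astar x := fun x => by
      simp only [dotProductEquiv_apply_apply, sub_dotProduct, dotProduct_gVec]
    have := le_of_convexHull_inter_nonempty hmeet (dotProductEquiv ℝ _ (A - Astar))
      (by rintro _ ⟨x, hx, rfl⟩; exact hℓ x ▸ uniformError_sub_le_of_mem_Eplus hQc hf hg A hx)
      (by rintro _ ⟨x, hx, rfl⟩; exact hℓ x ▸ sub_le_uniformError_sub_of_mem_Eminus hQc hf hg A hx)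
    linarith

/-- Assuming `card E₊(A*) + card E₋(A*) = n + 2`, `A*` is a global minimizer of `Ψ`
iff the convex hulls of `G₊(A*)` and `G₋(A*)` intersect. -/
theorem optimality_iff_convexHulls_intersect
    (d n : ℕ) (hd : 1 ≤ d) (hn : 1 ≤ n)
    (Q : Set (Fin d → ℝ)) (hQne : Q.Nonempty) (hQc : IsCompact Q)
    (f : (Fin d → ℝ) → ℝ) (hf : Continuous f)
    (g : Fin n → (Fin d → ℝ) → ℝ) (hg : ∀ i, Continuous (g i))
    (Astar : Fin (n + 1) → ℝ)
    (hfinp : (Eplus Q f g Astar).Finite) (hfinm : (Eminus Q f g Astar).Finite)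
    (hcard : (Eplus Q f g Astar).ncard + (Eminus Q f g Astar).ncard = n + 2) :
    (∀ A : Fin (n + 1) → ℝ, uniformError Q f g Astar ≤ uniformError Q f g A) ↔
      (convexHull ℝ (Gplus Q f g Astar) ∩ convexHull ℝ (Gminus Q f g Astar)).Nonempty :=
  optimality_iff_convexHulls_intersect_general d n Q hQne hQc f hf g hg Astar hfinp hfinm
end

section
/- If the convex hull of G₊(A*) and the convex hull of G₋(A*) have a common point, then A* is a global minimizer of Ψ, i.e., Ψ(A) ≥ Ψ(A*) for all A ∈ ℝ^{n+1}. -/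
/-- If the convex hulls of `G₊(A*)` and `G₋(A*)` have a common point, then `A*` is a
global minimizer of `Ψ`. -/
theorem convexHulls_intersect_imp_optimal
    (d n : ℕ) (hd : 1 ≤ d) (hn : 1 ≤ n)
    (Q : Set (Fin d → ℝ)) (hQne : Q.Nonempty) (hQc : IsCompact Q)
    (f : (Fin d → ℝ) → ℝ) (hf : Continuous f)
    (g : Fin n → (Fin d → ℝ) → ℝ) (hg : ∀ i, Continuous (g i))
    (Astar : Fin (n + 1) → ℝ)
    (hint : (convexHull ℝ (Gplus Q f g Astar) ∩ convexHull ℝ (Gminus Q f g Astar)).Nonempty) :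
    ∀ A : Fin (n + 1) → ℝ, uniformError Q f g Astar ≤ uniformError Q f g A := by

  intro A
  by_contra hlt
  push_neg at hlt
  obtain ⟨z, hzp, hzm⟩ := hint
  set B : Fin (n+1) → ℝ := fun i => A i - Astar i with hB
  set φ : (Fin (n+1) → ℝ) → ℝ := fun v => ∑ i, B i * v i with hφ
  have hlin : IsLinearMap ℝ φ := by
    constructor
    · intro u v; simp [hφ, mul_add, Finset.sum_add_distrib]
    · intro c v; simp [hφ, Finset.mul_sum, mul_left_comm]
  set c := uniformError Q f g Astar - uniformError Q f g A with hc
  have hcpos : 0 < c := by simp only [hc]; linarith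
  have hcont : Continuous fun x => |f x - modelFun g A x| := by
    apply Continuous.abs
    refine hf.sub ?_
    unfold modelFun
    exact continuous_const.add
      (continuous_finset_sum _ fun i _ => continuous_const.mul (hg i))
  have hbdd : BddAbove ((fun x => |f x - modelFun g A x|) '' Q) :=
    (hQc.image hcont).bddAbove
  have hle : ∀ x ∈ Q, |f x - modelFun g A x| ≤ uniformError Q f g A := fun x hx =>
    le_csSup hbdd ⟨x, hx, rfl⟩
  have hφg : ∀ x, φ (gVec g x) = modelFun g A x - modelFun g Astar x := by
    intro x
    simp only [hφ, hB, gVec, modelFun, Fin.sum_univ_succ, Fin.cons_zero, Fin.cons_succ,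
      sub_mul, Finset.sum_sub_distrib]
    ring
  have hplus : ∀ v ∈ Gplus Q f g Astar, c ≤ φ v := by
    rintro _ ⟨x, ⟨hxQ, hxE⟩, rfl⟩
    have h2 := abs_le.mp (hle x hxQ)
    rw [hφg x]
    linarith [h2.2, hxE]
  have hminus : ∀ v ∈ Gminus Q f g Astar, φ v ≤ -c := by
    rintro _ ⟨x, ⟨hxQ, hxE⟩, rfl⟩
    have h2 := abs_le.mp (hle x hxQ)
    rw [hφg x]
    linarith [h2.1, hxE]
  have h1 : c ≤ φ z :=
    convexHull_min hplus (convex_halfSpace_ge hlin c) hzp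
  have h2 : φ z ≤ -c :=
    convexHull_min hminus (convex_halfSpace_le hlin (-c)) hzm
  linarith
end

section
/- Let S⁺ and S⁻ be subsets of ℝ^{n+1} such that every vector in S⁺ ∪ S⁻ has first coordinate equal to 1. Then the zero vector belongs to the convex hull of S⁺ ∪ (−S⁻) if and only if the convex hull of S⁺ and the convex hull of S⁻ have nonempty intersection (here −S⁻ = {−v : v ∈ S⁻}). -/
/-- For sets `S⁺, S⁻ ⊆ ℝ^{n+1}` of vectors whose first coordinate is `1`, the zero
vector lies in the convex hull of `S⁺ ∪ (−S⁻)` iff the convex hulls of `S⁺` and `S⁻`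
intersect. -/
theorem zero_mem_convexHull_union_neg_iff
    (n : ℕ) (Sp Sm : Set (Fin (n + 1) → ℝ))
    (hfirst : ∀ v ∈ Sp ∪ Sm, v 0 = 1) :
    (0 : Fin (n + 1) → ℝ) ∈ convexHull ℝ (Sp ∪ ((fun v => -v) '' Sm)) ↔
      (convexHull ℝ Sp ∩ convexHull ℝ Sm).Nonempty := by
  have hlin : IsLinearMap ℝ (fun v : Fin (n + 1) → ℝ => v 0) :=
    ⟨fun a b => rfl, fun c a => rfl⟩
  have hhullp : convexHull ℝ Sp ⊆ {v | v 0 = 1} :=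
    convexHull_min (fun v hv => hfirst v (Or.inl hv)) (convex_hyperplane hlin 1)
  have hhullm : convexHull ℝ Sm ⊆ {v | v 0 = 1} :=
    convexHull_min (fun v hv => hfirst v (Or.inr hv)) (convex_hyperplane hlin 1)
  have hneg : ((fun v => -v) '' Sm) = -Sm := by
    ext x
    simp only [Set.mem_image, Set.mem_neg]
    constructor
    · rintro ⟨y, hy, rfl⟩; simpa using hy
    · intro h; exact ⟨-x, h, by simp⟩
  rcases Set.eq_empty_or_nonempty Sp with hp | hp
  · subst hp
    simp only [Set.empty_union, convexHull_empty, Set.empty_inter]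
    rw [hneg, convexHull_neg]
    constructor
    · rintro h
      have : (0 : Fin (n + 1) → ℝ) ∈ -{v : Fin (n + 1) → ℝ | v 0 = 1} :=
        Set.neg_subset_neg.2 hhullm h
      simp [Set.mem_neg] at this
    · rintro ⟨x, hx⟩; exact absurd hx (Set.notMem_empty x)
  rcases Set.eq_empty_or_nonempty Sm with hm | hm
  · subst hm
    simp only [Set.image_empty, Set.union_empty, convexHull_empty, Set.inter_empty]
    constructor
    · intro h
      have := hhullp h
      simp at this
    · rintro ⟨x, hx⟩; exact absurd hx (Set.notMem_empty x)
  rw [hneg, convexHull_union hp hm.neg, convexHull_neg, mem_convexJoin]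
  constructor
  · rintro ⟨x, hx, y, hy, a, b, ha, hb, hab, hxy⟩
    rw [Set.mem_neg] at hy
    have hx0 : x 0 = 1 := hhullp hx
    have hy0 : (-y) 0 = 1 := hhullm hy
    have hy0' : y 0 = -1 := by
      have : -(y 0) = 1 := hy0
      linarith
    have hab2 : a - b = 0 := by
      have := congrFun hxy 0
      simp [hx0, hy0'] at this
      linarith
    have ha2 : a = 1/2 := by linarith
    have hb2 : b = 1/2 := by linarith
    refine ⟨x, hx, ?_⟩
    have hxmy : x = -y := by
      have := hxy
      rw [ha2, hb2] at this
      funext i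
      have := congrFun this i
      simp at this
      simp only [Pi.neg_apply]
      linarith
    rw [hxmy]; exact hy
  · rintro ⟨x, hxp, hxm⟩
    refine ⟨x, hxp, -x, ?_, 1/2, 1/2, by norm_num, by norm_num, by norm_num, ?_⟩
    · rw [Set.mem_neg]; simpa using hxm
    · simp
end

section
/- Let p₁,…,p_m be finitely many points in ℝ^n (m ≥ 1). A point x belongs to the relative interior of the convex hull of {p₁,…,p_m} if and only if there exist strictly positive coefficients λ₁,…,λ_m with ∑_{i=1}^m λ_i = 1 and x = ∑_{i=1}^m λ_i p_i. -/
/-!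
If `x` lies in the relative interior of the hull, it can be pushed a little further away from the
barycentre `c` of the points without leaving the hull; so `x` lies strictly between a point of the
hull and `c`, and mixing their weights makes all weights of `x` positive. Conversely, positive
weights of `x` stay nonnegative under a small push away from any point `z` of the hull. Taking `z`
in the (nonempty) relative interior puts `x` strictly between a point of the hull and a relative
interior point, and such open segments stay in the relative interior.
-/

open Set Filter Topology

section IntrinsicInterior

variable {𝕜 V P : Type*} [Ring 𝕜] [AddCommGroup V] [Module 𝕜 V] [TopologicalSpace P]
  [AddTorsor V P] {s : Set P} {x : P}

theorem mem_intrinsicInterior_iff_mem_nhdsWithin :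
    x ∈ intrinsicInterior 𝕜 s ↔ x ∈ affineSpan 𝕜 s ∧ s ∈ 𝓝[affineSpan 𝕜 s] x := by
  constructor
  · rintro ⟨y, hy, rfl⟩
    exact ⟨y.2, preimage_coe_mem_nhds_subtype.1 (mem_interior_iff_mem_nhds.1 hy)⟩
  · rintro ⟨hxA, hs⟩
    exact ⟨⟨x, hxA⟩, mem_interior_iff_mem_nhds.2 (preimage_coe_mem_nhds_subtype.2 hs), rfl⟩

end IntrinsicInterior

section Segment

variable {E : Type*} [AddCommGroup E] [Module ℝ E] {s : Set E} {x c : E}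

theorem eventually_add_smul_sub_mem_of_mem_intrinsicInterior [TopologicalSpace E]
    [ContinuousAdd E] [ContinuousSMul ℝ E]
    (hx : x ∈ intrinsicInterior ℝ s) (hc : c ∈ affineSpan ℝ s) :
    ∀ᶠ δ in 𝓝 (0 : ℝ), x + δ • (x - c) ∈ s := by
  rw [mem_intrinsicInterior_iff_mem_nhdsWithin] at hx
  have hline : Tendsto (fun δ : ℝ => x + δ • (x - c)) (𝓝 0) (𝓝[affineSpan ℝ s] x) := by
    refine tendsto_nhdsWithin_iff.2 ⟨?_, Eventually.of_forall fun δ => ?_⟩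
    · exact Continuous.tendsto' (by fun_prop) _ _ (by simp)
    · show x + δ • (x - c) ∈ affineSpan ℝ s
      convert AffineMap.lineMap_mem (-δ) hx.1 hc using 1
      rw [AffineMap.lineMap_apply_module]
      module
  exact hline.eventually hx.2

theorem exists_mem_openSegment_of_eventually_add_smul_sub_mem
    (h : ∀ᶠ δ in 𝓝 (0 : ℝ), x + δ • (x - c) ∈ s) : ∃ y ∈ s, x ∈ openSegment ℝ y c := by
  obtain ⟨δ, hδ, hy⟩ := h.exists_gt
  refine ⟨_, hy, (1 + δ)⁻¹, δ / (1 + δ), by positivity, by positivity, by field_simp, ?_⟩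
  have : 1 + δ ≠ 0 := by positivity
  match_scalars <;> field_simp
  ring

end Segment

theorem Convex.openSegment_self_intrinsicInterior_subset_intrinsicInterior
    {𝕜 E : Type*} [Field 𝕜] [LinearOrder 𝕜] [IsStrictOrderedRing 𝕜] [AddCommGroup E] [Module 𝕜 E]
    [TopologicalSpace E] [IsTopologicalAddGroup E] [ContinuousConstSMul 𝕜 E] {s : Set E} {x y : E}
    (hs : Convex 𝕜 s) (hx : x ∈ s) (hy : y ∈ intrinsicInterior 𝕜 s) :
    openSegment 𝕜 x y ⊆ intrinsicInterior 𝕜 s := by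
  obtain ⟨hyA, hys⟩ := mem_intrinsicInterior_iff_mem_nhdsWithin.1 hy
  obtain ⟨U, hU, hyU, hUs⟩ := mem_nhdsWithin.1 hys
  have hxA : x ∈ affineSpan 𝕜 s := subset_affineSpan 𝕜 s hx
  rintro _ ⟨a, b, ha, hb, hab, rfl⟩
  set h := AffineMap.homothety x b
  have hz : a • x + b • y = h y := by
    rw [AffineMap.homothety_apply, vsub_eq_sub, vadd_eq_add, eq_sub_of_add_eq hab]
    module
  rw [hz, mem_intrinsicInterior_iff_mem_nhdsWithin]
  refine ⟨AffineMap.homothety_mem hxA b hyA, mem_nhdsWithin.2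
    ⟨h '' U, AffineMap.homothety_isOpenMap x b hb.ne' U hU, mem_image_of_mem h hyU, ?_⟩⟩
  rintro _ ⟨⟨u, huU, rfl⟩, hwA⟩
  have huA : u ∈ affineSpan 𝕜 s := by
    have hu : AffineMap.homothety x b⁻¹ (h u) = u := by
      simp [h, ← AffineMap.comp_apply, ← AffineMap.homothety_mul, hb.ne']
    exact hu ▸ AffineMap.homothety_mem hxA b⁻¹ hwA
  rw [AffineMap.homothety_eq_lineMap]
  exact hs.lineMap_mem hx (hUs ⟨huU, huA⟩) ⟨hb.le, by linarith⟩

section Weights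

variable {R E ι : Type*} [Field R] [LinearOrder R] [IsStrictOrderedRing R] [AddCommGroup E]
  [Module R E] [Fintype ι]

theorem mem_convexHull_range_iff_exists_sum {p : ι → E} {x : E} :
    x ∈ convexHull R (range p) ↔
      ∃ w : ι → R, (∀ i, 0 ≤ w i) ∧ ∑ i, w i = 1 ∧ ∑ i, w i • p i = x := by
  classical
  refine ⟨fun hx => ?_, fun ⟨w, hw₀, hw₁, hx⟩ =>
    mem_convexHull_of_exists_fintype w p hw₀ hw₁ mem_range_self hx⟩
  have hsub : convexHull R (range p) ⊆ Fintype.linearCombination R p '' stdSimplex R ι := by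
    refine convexHull_min ?_ ((convex_stdSimplex R ι).linear_image _)
    rintro _ ⟨i, rfl⟩
    exact ⟨Pi.single i 1, single_mem_stdSimplex R i, by simp⟩
  obtain ⟨w, ⟨hw₀, hw₁⟩, rfl⟩ := hsub hx
  exact ⟨w, hw₀, hw₁, (Fintype.linearCombination_apply R p w).symm⟩

theorem exists_pos_sum_eq_one [Nonempty ι] : ∃ w : ι → R, (∀ i, 0 < w i) ∧ ∑ i, w i = 1 :=
  ⟨fun _ => (Fintype.card ι : R)⁻¹, fun _ => by positivity, by simp⟩

theorem exists_pos_sum_smul_eq_of_mem_openSegment {p : ι → E} {x y c : E}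
    (hy : y ∈ convexHull R (range p))
    (hc : ∃ μ : ι → R, (∀ i, 0 < μ i) ∧ ∑ i, μ i = 1 ∧ c = ∑ i, μ i • p i)
    (hx : x ∈ openSegment R y c) :
    ∃ w : ι → R, (∀ i, 0 < w i) ∧ ∑ i, w i = 1 ∧ x = ∑ i, w i • p i := by
  obtain ⟨ν, hν₀, hν₁, rfl⟩ := mem_convexHull_range_iff_exists_sum.1 hy
  obtain ⟨μ, hμ₀, hμ₁, rfl⟩ := hc
  obtain ⟨a, b, ha, hb, hab, rfl⟩ := hx
  refine ⟨a • ν + b • μ, fun i => ?_, ?_, ?_⟩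
  · exact add_pos_of_nonneg_of_pos (mul_nonneg ha.le (hν₀ i)) (mul_pos hb (hμ₀ i))
  · simp [Finset.sum_add_distrib, ← Finset.mul_sum, hν₁, hμ₁, hab]
  · simp [add_smul, mul_smul, Finset.sum_add_distrib, Finset.smul_sum]

theorem eventually_add_smul_sub_mem_convexHull_range [TopologicalSpace R] [OrderTopology R]
    {p : ι → E} {x z : E}
    (hx : ∃ w : ι → R, (∀ i, 0 < w i) ∧ ∑ i, w i = 1 ∧ x = ∑ i, w i • p i)
    (hz : z ∈ convexHull R (range p)) :
    ∀ᶠ δ in 𝓝 (0 : R), x + δ • (x - z) ∈ convexHull R (range p) := by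
  obtain ⟨w, hw₀, hw₁, rfl⟩ := hx
  obtain ⟨μ, -, hμ₁, rfl⟩ := mem_convexHull_range_iff_exists_sum.1 hz
  have hpos : ∀ᶠ δ in 𝓝 (0 : R), ∀ i, 0 < (1 + δ) * w i - δ * μ i := by
    refine eventually_all.2 fun i => ?_
    have hcont : Continuous fun δ : R => (1 + δ) * w i - δ * μ i := by fun_prop
    exact hcont.tendsto' 0 _ (by simp) |>.eventually (lt_mem_nhds (hw₀ i))
  filter_upwards [hpos] with δ hδ
  refine mem_convexHull_range_iff_exists_sum.2 ⟨fun i => (1 + δ) * w i - δ * μ i,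
    fun i => (hδ i).le, ?_, ?_⟩
  · simp [Finset.sum_sub_distrib, ← Finset.mul_sum, hw₁, hμ₁]
  · simp only [sub_smul, mul_smul, add_smul, one_smul, Finset.sum_sub_distrib,
      Finset.sum_add_distrib, ← Finset.smul_sum]
    module

end Weights

theorem mem_intrinsicInterior_convexHull_range_iff {E ι : Type*} [NormedAddCommGroup E]
    [NormedSpace ℝ E] [FiniteDimensional ℝ E] [Fintype ι] {p : ι → E} {x : E} :
    x ∈ intrinsicInterior ℝ (convexHull ℝ (range p)) ↔
      ∃ w : ι → ℝ, (∀ i, 0 < w i) ∧ ∑ i, w i = 1 ∧ x = ∑ i, w i • p i := by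
  refine ⟨fun hx => ?_, fun hx => ?_⟩
  · have : Nonempty ι := range_nonempty_iff_nonempty.1
      (convexHull_nonempty_iff.1 ⟨x, intrinsicInterior_subset hx⟩)
    obtain ⟨μ, hμ₀, hμ₁⟩ := exists_pos_sum_eq_one (R := ℝ) (ι := ι)
    have hc : ∑ i, μ i • p i ∈ convexHull ℝ (range p) :=
      mem_convexHull_range_iff_exists_sum.2 ⟨μ, fun i => (hμ₀ i).le, hμ₁, rfl⟩
    obtain ⟨y, hy, hxy⟩ := exists_mem_openSegment_of_eventually_add_smul_sub_mem
      (eventually_add_smul_sub_mem_of_mem_intrinsicInterior hx (subset_affineSpan ℝ _ hc))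
    exact exists_pos_sum_smul_eq_of_mem_openSegment hy ⟨μ, hμ₀, hμ₁, rfl⟩ hxy
  · obtain ⟨w, hw₀, hw₁, rfl⟩ := hx
    have hxC : ∑ i, w i • p i ∈ convexHull ℝ (range p) :=
      mem_convexHull_range_iff_exists_sum.2 ⟨w, fun i => (hw₀ i).le, hw₁, rfl⟩
    obtain ⟨z, hz⟩ := Set.Nonempty.intrinsicInterior (convex_convexHull ℝ _) ⟨_, hxC⟩
    obtain ⟨y, hy, hxy⟩ := exists_mem_openSegment_of_eventually_add_smul_sub_mem
      (eventually_add_smul_sub_mem_convexHull_range ⟨w, hw₀, hw₁, rfl⟩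
        (intrinsicInterior_subset hz))
    exact (convex_convexHull ℝ _).openSegment_self_intrinsicInterior_subset_intrinsicInterior
      hy hz hxy

theorem mem_intrinsicInterior_convexHull_iff_pos_combination_general
    (n m : ℕ)
    (p : Fin m → (Fin n → ℝ)) (x : Fin n → ℝ) :
    x ∈ intrinsicInterior ℝ (convexHull ℝ (Set.range p)) ↔
      ∃ lam : Fin m → ℝ, (∀ i, 0 < lam i) ∧ ∑ i, lam i = 1 ∧
        x = ∑ i, lam i • p i :=
  mem_intrinsicInterior_convexHull_range_iff

/-- A point lies in the relative interior of the convex hull of finitely many points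
`p₁,…,p_m` iff it is a convex combination of all of them with strictly positive
coefficients. -/
theorem mem_intrinsicInterior_convexHull_iff_pos_combination
    (n m : ℕ) (hn : 1 ≤ n) (hm : 1 ≤ m)
    (p : Fin m → (Fin n → ℝ)) (x : Fin n → ℝ) :
    x ∈ intrinsicInterior ℝ (convexHull ℝ (Set.range p)) ↔
      ∃ lam : Fin m → ℝ, (∀ i, 0 < lam i) ∧ ∑ i, lam i = 1 ∧
        x = ∑ i, lam i • p i :=
  mem_intrinsicInterior_convexHull_iff_pos_combination_general n m p x
end

section
/- Let u₁,…,u_p, v₁,…,v_q, w ∈ ℝ^n. Suppose α₁,…,α_p > 0 with ∑ α_i = 1 and β₁,…,β_q > 0 with ∑ β_j = 1 satisfy ∑_{i=1}^p α_i u_i = ∑_{j=1}^q β_j v_j, and suppose α > 0 and α̃₁,…,α̃_p > 0 with α + ∑ α̃_i = 1 and β̃₁,…,β̃_q > 0 with ∑ β̃_j = 1 satisfy α w + ∑_{i=1}^p α̃_i u_i = ∑_{j=1}^q β̃_j v_j. Set γ = min( min_{1 ≤ i ≤ p} α̃_i/α_i , min_{1 ≤ j ≤ q} β̃_j/β_j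 ) and assume γ = α̃₁/α₁. Then γ < 1, all the coefficients α̃_i − γα_i (i = 2,…,p) and β̃_j − γβ_j (j = 1,…,q) are nonnegative, α w + ∑_{i=2}^p (α̃_i − γα_i) u_i = ∑_{j=1}^q (β̃_j − γβ_j) v_j, and α + ∑_{i=2}^p (α̃_i − γα_i) = ∑_{j=1}^q (β̃_j − γβ_j) = 1 − γ > 0; consequently the convex hull of {w, u₂,…,u_p} intersects the convex hull of {v₁,…,v_q}. -/
open Finset

/-- Step-two exchange computation (case `γ = α̃₁/α₁`): given two intersecting strictly
positive convex combinations and a third one involving the new point `w`, with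
`γ = min(min α̃ᵢ/αᵢ, min β̃ⱼ/βⱼ) = α̃₁/α₁`, one gets `γ < 1`, nonnegative updated
coefficients, the updated convex-combination identity with total weight `1 − γ > 0`,
and hence the convex hulls of `{w, u₂,…,u_p}` and `{v₁,…,v_q}` intersect.
(Points are indexed by `Fin (p+1)` and `Fin (q+1)`, index `0` playing the role of `1`.) -/
theorem exchange_case_alpha
    (n p q : ℕ) (hn : 1 ≤ n)
    (u : Fin (p + 1) → (Fin n → ℝ)) (v : Fin (q + 1) → (Fin n → ℝ)) (w : Fin n → ℝ)
    (α : Fin (p + 1) → ℝ) (β : Fin (q + 1) → ℝ)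
    (tα : Fin (p + 1) → ℝ) (tβ : Fin (q + 1) → ℝ) (a : ℝ)
    (hα : ∀ i, 0 < α i) (hαs : ∑ i, α i = 1)
    (hβ : ∀ j, 0 < β j) (hβs : ∑ j, β j = 1)
    (heq1 : ∑ i, α i • u i = ∑ j, β j • v j)
    (ha : 0 < a) (htα : ∀ i, 0 < tα i) (htαs : a + ∑ i, tα i = 1)
    (htβ : ∀ j, 0 < tβ j) (htβs : ∑ j, tβ j = 1)
    (heq2 : a • w + ∑ i, tα i • u i = ∑ j, tβ j • v j)
    (γ : ℝ)
    (hγdef : γ = min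
      (Finset.univ.inf' Finset.univ_nonempty (fun i => tα i / α i))
      (Finset.univ.inf' Finset.univ_nonempty (fun j => tβ j / β j)))
    (hγ1 : γ = tα 0 / α 0) :
    γ < 1 ∧
    (∀ i, i ≠ 0 → 0 ≤ tα i - γ * α i) ∧
    (∀ j, 0 ≤ tβ j - γ * β j) ∧
    a • w + ∑ i ∈ Finset.univ.erase 0, (tα i - γ * α i) • u i
      = ∑ j, (tβ j - γ * β j) • v j ∧
    a + ∑ i ∈ Finset.univ.erase 0, (tα i - γ * α i) = 1 - γ ∧
    ∑ j, (tβ j - γ * β j) = 1 - γ ∧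
    0 < 1 - γ ∧
    (convexHull ℝ (insert w (u '' {i | i ≠ 0})) ∩
      convexHull ℝ (Set.range v)).Nonempty := by
  have hγα : ∀ i, γ * α i ≤ tα i := by
    intro i
    have h1 : γ ≤ tα i / α i := by
      rw [hγdef]
      exact (min_le_left _ _).trans (Finset.inf'_le _ (mem_univ i))
    exact (le_div_iff₀ (hα i)).mp h1
  have hγβ : ∀ j, γ * β j ≤ tβ j := by
    intro j
    have h1 : γ ≤ tβ j / β j := by
      rw [hγdef]
      exact (min_le_right _ _).trans (Finset.inf'_le _ (mem_univ j))
    exact (le_div_iff₀ (hβ j)).mp h1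
  have hγlt : γ < 1 := by
    have hs : ∑ i, γ * α i ≤ ∑ i, tα i := Finset.sum_le_sum fun i _ => hγα i
    rw [← Finset.mul_sum, hαs, mul_one] at hs
    linarith
  have h0 : tα 0 - γ * α 0 = 0 := by
    rw [hγ1, div_mul_cancel₀ _ (hα 0).ne']
    ring
  have hαnn : ∀ i, 0 ≤ tα i - γ * α i := fun i => sub_nonneg.mpr (hγα i)
  have hβnn : ∀ j, 0 ≤ tβ j - γ * β j := fun j => sub_nonneg.mpr (hγβ j)
  have hsum_erase : ∀ (f : Fin (p+1) → (Fin n → ℝ)),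
      ∑ i ∈ Finset.univ.erase 0, (tα i - γ * α i) • f i
        = ∑ i, (tα i - γ * α i) • f i := by
    intro f
    rw [← Finset.add_sum_erase _ _ (mem_univ 0), h0, zero_smul, zero_add]
  have hkey : a • w + ∑ i ∈ Finset.univ.erase 0, (tα i - γ * α i) • u i
      = ∑ j, (tβ j - γ * β j) • v j := by
    rw [hsum_erase]
    simp only [sub_smul, mul_smul, Finset.sum_sub_distrib, ← Finset.smul_sum]
    rw [heq1, ← heq2]
    abel
  have hE : ∑ i ∈ Finset.univ.erase 0, (tα i - γ * α i) = ∑ i, (tα i - γ * α i) := by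
    rw [← Finset.add_sum_erase _ (fun i => tα i - γ * α i) (mem_univ 0), h0, zero_add]
  have hsumα : a + ∑ i ∈ Finset.univ.erase 0, (tα i - γ * α i) = 1 - γ := by
    rw [hE, Finset.sum_sub_distrib, ← Finset.mul_sum, hαs]
    linarith
  have hsumβ : ∑ j, (tβ j - γ * β j) = 1 - γ := by
    have : ∑ j, (tβ j - γ * β j) = (∑ j, tβ j) - γ * ∑ j, β j := by
      rw [Finset.sum_sub_distrib, Finset.mul_sum]
    rw [this, hβs, htβs]; ring
  have hpos : 0 < 1 - γ := by linarith
  refine ⟨hγlt, fun i _ => hαnn i, hβnn, hkey, hsumα, hsumβ, hpos, ?_⟩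
  -- intersection point
  set W : Fin (p+1) → ℝ := fun i => if i = 0 then a else tα i - γ * α i with hW
  set z : Fin (p+1) → (Fin n → ℝ) := fun i => if i = 0 then w else u i with hz
  have hWsum : ∑ i, W i = 1 - γ := by
    rw [← hsumα, ← Finset.add_sum_erase _ W (mem_univ 0)]
    simp only [hW, if_pos rfl]
    congr 1
    exact Finset.sum_congr rfl fun i hi => by
      simp [Finset.mem_erase.mp hi |>.1]
  have hWz : ∑ i, W i • z i = a • w + ∑ i ∈ Finset.univ.erase 0, (tα i - γ * α i) • u i := by
    rw [← Finset.add_sum_erase _ (fun i => W i • z i) (mem_univ 0)]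
    simp only [hW, hz, if_pos rfl]
    congr 1
    exact Finset.sum_congr rfl fun i hi => by
      simp [Finset.mem_erase.mp hi |>.1]
  refine ⟨Finset.univ.centerMass W z, ?_, ?_⟩
  · apply Finset.centerMass_mem_convexHull
    · intro i _
      by_cases h : i = 0
      · simp [hW, h, ha.le]
      · simp [hW, h, hαnn i]
    · rw [hWsum]; exact hpos
    · intro i _
      by_cases h : i = 0
      · simp [hz, h]
      · simp only [hz, if_neg h]
        exact Set.mem_insert_of_mem _ ⟨i, h, rfl⟩
  · have : Finset.univ.centerMass W z
        = Finset.univ.centerMass (fun j => tβ j - γ * β j) v := by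
      rw [Finset.centerMass, Finset.centerMass, hWsum, hsumβ, hWz, hkey]
    rw [this]
    apply Finset.centerMass_mem_convexHull
    · intro j _; exact hβnn j
    · rw [hsumβ]; exact hpos
    · intro j _; exact Set.mem_range_self j
end

section
/- Let u₁,…,u_p, v₁,…,v_q, w ∈ ℝ^n. Suppose α₁,…,α_p > 0 with ∑ α_i = 1 and β₁,…,β_q > 0 with ∑ β_j = 1 satisfy ∑_{i=1}^p α_i u_i = ∑_{j=1}^q β_j v_j, and suppose α > 0 and α̃₁,…,α̃_p > 0 with α + ∑ α̃_i = 1 and β̃₁,…,β̃_q > 0 with ∑ β̃_j = 1 satisfy α w + ∑_{i=1}^p α̃_i u_i = ∑_{j=1}^q β̃_j v_j. Set γ = min( min_{1 ≤ i ≤ p} α̃_i/α_i , min_{1 ≤ j ≤ q} β̃_j/β_j ) and assume γ = β̃₁/β₁. Then γ < 1, all the coefficients α̃_i − γα_i (i = 1,…,p) and β̃_j − γβ_j (j = 2,…,q) are nonnegative, α w + ∑_{i=1}^p (α̃_i − γα_i) u_i = ∑_{j=2}^q (β̃_j − γβ_j) v_j, and α + ∑_{i=1}^p (α̃_i − γα_i)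 = ∑_{j=2}^q (β̃_j − γβ_j) = 1 − γ > 0; consequently the convex hull of {w, u₁,…,u_p} intersects the convex hull of {v₂,…,v_q}. -/
open Finset

/-- Step-two exchange computation (case `γ = β̃₁/β₁`): given two intersecting strictly
positive convex combinations and a third one involving the new point `w`, with
`γ = min(min α̃ᵢ/αᵢ, min β̃ⱼ/βⱼ) = β̃₁/β₁`, one gets `γ < 1`, nonnegative updated
coefficients, the updated convex-combination identity with total weight `1 − γ > 0`,
and hence the convex hulls of `{w, u₁,…,u_p}` and `{v₂,…,v_q}` intersect.
(Points are indexed by `Fin (p+1)` and `Fin (q+1)`, index `0` playing the role of `1`.) -/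
theorem exchange_case_beta
    (n p q : ℕ) (hn : 1 ≤ n)
    (u : Fin (p + 1) → (Fin n → ℝ)) (v : Fin (q + 1) → (Fin n → ℝ)) (w : Fin n → ℝ)
    (α : Fin (p + 1) → ℝ) (β : Fin (q + 1) → ℝ)
    (tα : Fin (p + 1) → ℝ) (tβ : Fin (q + 1) → ℝ) (a : ℝ)
    (hα : ∀ i, 0 < α i) (hαs : ∑ i, α i = 1)
    (hβ : ∀ j, 0 < β j) (hβs : ∑ j, β j = 1)
    (heq1 : ∑ i, α i • u i = ∑ j, β j • v j)
    (ha : 0 < a) (htα : ∀ i, 0 < tα i) (htαs : a + ∑ i, tα i = 1)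
    (htβ : ∀ j, 0 < tβ j) (htβs : ∑ j, tβ j = 1)
    (heq2 : a • w + ∑ i, tα i • u i = ∑ j, tβ j • v j)
    (γ : ℝ)
    (hγdef : γ = min
      (Finset.univ.inf' Finset.univ_nonempty (fun i => tα i / α i))
      (Finset.univ.inf' Finset.univ_nonempty (fun j => tβ j / β j)))
    (hγ1 : γ = tβ 0 / β 0) :
    γ < 1 ∧
    (∀ i, 0 ≤ tα i - γ * α i) ∧
    (∀ j, j ≠ 0 → 0 ≤ tβ j - γ * β j) ∧
    a • w + ∑ i, (tα i - γ * α i) • u i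
      = ∑ j ∈ Finset.univ.erase 0, (tβ j - γ * β j) • v j ∧
    a + ∑ i, (tα i - γ * α i) = 1 - γ ∧
    ∑ j ∈ Finset.univ.erase 0, (tβ j - γ * β j) = 1 - γ ∧
    0 < 1 - γ ∧
    (convexHull ℝ (insert w (Set.range u)) ∩
      convexHull ℝ (v '' {j | j ≠ 0})).Nonempty := by
  have hβ0 : (β 0 : ℝ) ≠ 0 := (hβ 0).ne'
  have hγβ0 : γ * β 0 = tβ 0 := by rw [hγ1]; field_simp
  have hγle_α : ∀ i, γ * α i ≤ tα i := by
    intro i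
    have h1 : γ ≤ tα i / α i := by
      rw [hγdef]
      exact le_trans (min_le_left _ _) (Finset.inf'_le _ (Finset.mem_univ i))
    exact (le_div_iff₀ (hα i)).mp h1
  have hγle_β : ∀ j, γ * β j ≤ tβ j := by
    intro j
    have h1 : γ ≤ tβ j / β j := by
      rw [hγdef]
      exact le_trans (min_le_right _ _) (Finset.inf'_le _ (Finset.mem_univ j))
    exact (le_div_iff₀ (hβ j)).mp h1
  have hγpos : 0 < γ := by rw [hγ1]; exact div_pos (htβ 0) (hβ 0)
  have hγlt1 : γ < 1 := by
    have h1 : γ * 1 ≤ ∑ i, tα i := by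
      rw [← hαs, Finset.mul_sum]
      exact Finset.sum_le_sum fun i _ => hγle_α i
    nlinarith
  have hnnα : ∀ i, 0 ≤ tα i - γ * α i := fun i => by linarith [hγle_α i]
  have hnnβ : ∀ j, 0 ≤ tβ j - γ * β j := fun j => by linarith [hγle_β j]
  have hsumα : a + ∑ i, (tα i - γ * α i) = 1 - γ := by
    rw [Finset.sum_sub_distrib, ← Finset.mul_sum, hαs]
    linarith
  have h0 : tβ 0 - γ * β 0 = 0 := by linarith
  have hsumβ : ∑ j ∈ Finset.univ.erase 0, (tβ j - γ * β j) = 1 - γ := by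
    have hall : ∑ j, (tβ j - γ * β j) = 1 - γ := by
      rw [Finset.sum_sub_distrib, ← Finset.mul_sum, hβs, htβs]; ring
    rw [← hall, ← Finset.add_sum_erase Finset.univ _ (Finset.mem_univ 0), h0, zero_add]
  have heq : a • w + ∑ i, (tα i - γ * α i) • u i
      = ∑ j ∈ Finset.univ.erase 0, (tβ j - γ * β j) • v j := by
    have hall : a • w + ∑ i, (tα i - γ * α i) • u i = ∑ j, (tβ j - γ * β j) • v j := by
      have l : a • w + ∑ i, (tα i - γ * α i) • u i
          = (a • w + ∑ i, tα i • u i) - γ • ∑ i, α i • u i := by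
        simp only [sub_smul, mul_smul, Finset.sum_sub_distrib, Finset.smul_sum]
        abel
      have r : ∑ j, (tβ j - γ * β j) • v j = (∑ j, tβ j • v j) - γ • ∑ j, β j • v j := by
        simp only [sub_smul, mul_smul, Finset.sum_sub_distrib, Finset.smul_sum]
      rw [l, r, heq1, heq2]
    have h0' : (tβ 0 - γ * β 0) • v 0 = 0 := by rw [h0, zero_smul]
    rw [hall, ← Finset.add_sum_erase Finset.univ _ (Finset.mem_univ 0), h0', zero_add]
  have hpos1γ : 0 < 1 - γ := by linarith
  refine ⟨hγlt1, hnnα, fun j _ => hnnβ j, heq, hsumα, hsumβ, hpos1γ, ?_⟩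
  -- intersection point
  set W : Fin (p + 2) → ℝ := Fin.cons a (fun i => tα i - γ * α i) with hW
  set Z : Fin (p + 2) → (Fin n → ℝ) := Fin.cons w u with hZ
  have hWs : ∑ i, W i = 1 - γ := by
    rw [hW, Fin.sum_cons]; exact hsumα
  have hWZ : ∑ i, W i • Z i = a • w + ∑ i, (tα i - γ * α i) • u i := by
    rw [Fin.sum_univ_succ]
    simp [hW, hZ]
  have hx1 : Finset.univ.centerMass W Z ∈ convexHull ℝ (insert w (Set.range u)) := by
    apply Finset.centerMass_mem_convexHull
    · intro i _
      refine Fin.cases ?_ ?_ i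
      · simpa [hW] using ha.le
      · intro i; simpa [hW] using hnnα i
    · rw [hWs]; exact hpos1γ
    · intro i _
      refine Fin.cases ?_ ?_ i
      · simp [hZ]
      · intro i; simp [hZ]
  have hx2 : (Finset.univ.erase (0 : Fin (q + 1))).centerMass (fun j => tβ j - γ * β j) v
      ∈ convexHull ℝ (v '' {j | j ≠ 0}) := by
    apply Finset.centerMass_mem_convexHull
    · intro j _; exact hnnβ j
    · rw [hsumβ]; exact hpos1γ
    · intro j hj
      exact Set.mem_image_of_mem v (Finset.ne_of_mem_erase hj)
  have hcm : Finset.univ.centerMass W Z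
      = (Finset.univ.erase (0 : Fin (q + 1))).centerMass (fun j => tβ j - γ * β j) v := by
    rw [Finset.centerMass, Finset.centerMass, hWs, hsumβ, hWZ, heq]
  exact ⟨_, hx1, hcm ▸ hx2⟩
end

section
/- Suppose: (a) f(y_i) − L(A_o, y_i) = σ_o for all i = 1,…,p and f(z_j) − L(A_o, z_j) = −σ_o for all j = 1,…,q; (b) f(y) − L(A_new, y) = σ_new, f(y_i) − L(A_new, y_i) = σ_new for all i = 2,…,p, and f(z_j) − L(A_new, z_j) = −σ_new for all j = 1,…,q; (c) there are coefficients α > 0, α̃₂,…,α̃_p ≥ 0 with α + ∑_{i=2}^p α̃_i = 1 and β̃₁,…,β̃_q ≥ 0 with ∑_{j=1}^q β̃_j = 1 such that α·(1, ĝ(y)) + ∑_{i=2}^p α̃_i·(1, ĝ(y_i)) = ∑_{j=1}^q β̃_j·(1, ĝ(z_j)) in ℝ^{n+1}. Then 2σ_new = α(f(y) − L(A_o, y)) + (2 − α)σ_o. -/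
open Finset

/-- Step-three computation: if `A_o` deviates by `σ_o` (with signs) on the old basis
`y₁,…,y_p, z₁,…,z_q`, `A_new` deviates by `σ_new` on the new basis
`y, y₂,…,y_p, z₁,…,z_q`, and the vectors `(1, ĝ(·))` of the new basis satisfy the
convex-combination relation (c), then `2σ_new = α(f(y) − L(A_o,y)) + (2 − α)σ_o`.
(Points `y₁,…,y_p` are indexed by `Fin (p+1)`, index `0` playing the role of `1`;
similarly for `z`.) -/
theorem new_deviation_formula
    (d n p q : ℕ) (hd : 1 ≤ d) (hn : 1 ≤ n)
    (g : Fin n → (Fin d → ℝ) → ℝ) (f : (Fin d → ℝ) → ℝ)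
    (y : Fin d → ℝ) (yb : Fin (p + 1) → (Fin d → ℝ)) (zb : Fin (q + 1) → (Fin d → ℝ))
    (Ao Anew : Fin (n + 1) → ℝ) (σo σnew : ℝ)
    -- (a) deviations of the original modelling function on the original basis
    (hao : ∀ i, f (yb i) - (Ao 0 + ∑ k : Fin n, Ao k.succ * g k (yb i)) = σo)
    (hao' : ∀ j, f (zb j) - (Ao 0 + ∑ k : Fin n, Ao k.succ * g k (zb j)) = -σo)
    -- (b) deviations of the new modelling function on the new basis
    (hbn : f y - (Anew 0 + ∑ k : Fin n, Anew k.succ * g k y) = σnew)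
    (hbn' : ∀ i, i ≠ 0 →
      f (yb i) - (Anew 0 + ∑ k : Fin n, Anew k.succ * g k (yb i)) = σnew)
    (hbn'' : ∀ j, f (zb j) - (Anew 0 + ∑ k : Fin n, Anew k.succ * g k (zb j)) = -σnew)
    -- (c) the convex-combination relation on the new basis
    (α : ℝ) (tα : Fin (p + 1) → ℝ) (tβ : Fin (q + 1) → ℝ)
    (hα : 0 < α) (htα : ∀ i, i ≠ 0 → 0 ≤ tα i)
    (htαs : α + ∑ i ∈ Finset.univ.erase 0, tα i = 1)
    (htβ : ∀ j, 0 ≤ tβ j) (htβs : ∑ j, tβ j = 1)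
    (hcomb : α • (Fin.cons 1 (fun k : Fin n => g k y) : Fin (n + 1) → ℝ)
        + ∑ i ∈ Finset.univ.erase 0,
            tα i • (Fin.cons 1 (fun k : Fin n => g k (yb i)) : Fin (n + 1) → ℝ)
      = ∑ j, tβ j • (Fin.cons 1 (fun k : Fin n => g k (zb j)) : Fin (n + 1) → ℝ)) :
    2 * σnew = α * (f y - (Ao 0 + ∑ k : Fin n, Ao k.succ * g k y)) + (2 - α) * σo := by
  have key : ∀ A : Fin (n+1) → ℝ,
      α * (A 0 + ∑ k : Fin n, A k.succ * g k y)
        + ∑ i ∈ Finset.univ.erase 0, tα i * (A 0 + ∑ k : Fin n, A k.succ * g k (yb i))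
      = ∑ j, tβ j * (A 0 + ∑ k : Fin n, A k.succ * g k (zb j)) := by
    intro A
    have hu : ∀ x : Fin d → ℝ, A 0 + ∑ k : Fin n, A k.succ * g k x
        = ∑ l, A l * (Fin.cons 1 (fun k => g k x) : Fin (n+1) → ℝ) l := by
      intro x; rw [Fin.sum_univ_succ]; simp
    simp only [hu, Finset.mul_sum]
    rw [Finset.sum_comm, Finset.sum_comm (s := (Finset.univ : Finset (Fin (q+1)))),
      ← Finset.sum_add_distrib]
    refine Finset.sum_congr rfl fun l _ => ?_
    have hl := congrFun hcomb l
    simp only [Pi.add_apply, Finset.sum_apply, Pi.smul_apply, smul_eq_mul] at hl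
    have h2 := congrArg (fun t => A l * t) hl
    simp only [mul_add, Finset.mul_sum, mul_left_comm (A l)] at h2
    exact h2
  have h1 := key Anew
  have h2 := key Ao
  -- rewrite model values via deviations
  have S1 : ∑ i ∈ Finset.univ.erase 0, tα i * (Anew 0 + ∑ k : Fin n, Anew k.succ * g k (yb i))
      = (∑ i ∈ Finset.univ.erase 0, tα i * f (yb i))
        - (∑ i ∈ Finset.univ.erase 0, tα i) * σnew := by
    rw [Finset.sum_mul, ← Finset.sum_sub_distrib]
    refine Finset.sum_congr rfl fun i hi => ?_
    linear_combination (-(tα i)) * hbn' i (Finset.ne_of_mem_erase hi)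
  have S2 : ∑ j, tβ j * (Anew 0 + ∑ k : Fin n, Anew k.succ * g k (zb j))
      = (∑ j, tβ j * f (zb j)) + (∑ j, tβ j) * σnew := by
    rw [Finset.sum_mul, ← Finset.sum_add_distrib]
    refine Finset.sum_congr rfl fun j _ => ?_
    linear_combination (-(tβ j)) * hbn'' j
  have S3 : ∑ i ∈ Finset.univ.erase 0, tα i * (Ao 0 + ∑ k : Fin n, Ao k.succ * g k (yb i))
      = (∑ i ∈ Finset.univ.erase 0, tα i * f (yb i))
        - (∑ i ∈ Finset.univ.erase 0, tα i) * σo := by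
    rw [Finset.sum_mul, ← Finset.sum_sub_distrib]
    refine Finset.sum_congr rfl fun i _ => ?_
    linear_combination (-(tα i)) * hao i
  have S4 : ∑ j, tβ j * (Ao 0 + ∑ k : Fin n, Ao k.succ * g k (zb j))
      = (∑ j, tβ j * f (zb j)) + (∑ j, tβ j) * σo := by
    rw [Finset.sum_mul, ← Finset.sum_add_distrib]
    refine Finset.sum_congr rfl fun j _ => ?_
    linear_combination (-(tβ j)) * hao' j
  rw [S1, S2, htβs] at h1
  rw [S3, S4, htβs] at h2
  have hy : Anew 0 + ∑ k : Fin n, Anew k.succ * g k y = f y - σnew := by linarith [hbn]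
  rw [hy] at h1
  linear_combination -h1 + h2 + (σo - σnew) * htαs
end

section
/- Suppose: (a) f(y_i) − L(A_o, y_i) = σ_o for all i = 1,…,p and f(z_j) − L(A_o, z_j) = −σ_o for all j = 1,…,q; (b) f(y) − L(A_new, y) = σ_new, f(y_i) − L(A_new, y_i) = σ_new for all i = 2,…,p, and f(z_j) − L(A_new, z_j) = −σ_new for all j = 1,…,q; (c) there are coefficients α > 0, α̃₂,…,α̃_p ≥ 0 with α + ∑_{i=2}^p α̃_i = 1 and β̃₁,…,β̃_q ≥ 0 with ∑_{j=1}^q β̃_j = 1 such that α·(1, ĝ(y)) + ∑_{i=2}^p α̃_i·(1, ĝ(y_i)) = ∑_{j=1}^q β̃_j·(1, ĝ(z_j)) in ℝ^{n+1}; (d) the new point y has strictly larger deviation under A_o than the old basis: f(y) − L(A_o, y) > σ_o. Then the deviation of the new Chebyshev interpolation modelling function is strictly larger than that of the original one: σ_new > σ_o. -/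
open Finset

lemma pair_sum_aux {m : ℕ} {ι : Type*} (A : Fin m → ℝ) (s : Finset ι)
    (c : ι → ℝ) (w : ι → Fin m → ℝ) :
    (∑ k, A k * (∑ i ∈ s, c i • w i) k) = ∑ i ∈ s, c i * ∑ k, A k * w i k := by
  simp only [Finset.sum_apply, Pi.smul_apply, smul_eq_mul, Finset.mul_sum]
  rw [Finset.sum_comm]
  exact Finset.sum_congr rfl fun i _ =>
    Finset.sum_congr rfl fun k _ => by ring

/-- Step-three computation: if `A_o` deviates by `σ_o` (with signs) on the old basis
`y₁,…,y_p, z₁,…,z_q`, `A_new` deviates by `σ_new` on the new basis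
`y, y₂,…,y_p, z₁,…,z_q`, and the vectors `(1, ĝ(·))` of the new basis satisfy the
convex-combination relation (c), and the new point `y` has strictly larger deviation
under `A_o` than the old basis (`f(y) − L(A_o,y) > σ_o`), then `σ_new > σ_o`.
(Points `y₁,…,y_p` are indexed by `Fin (p+1)`, index `0` playing the role of `1`;
similarly for `z`.) -/
theorem new_deviation_strictly_larger
    (d n p q : ℕ) (hd : 1 ≤ d) (hn : 1 ≤ n)
    (g : Fin n → (Fin d → ℝ) → ℝ) (f : (Fin d → ℝ) → ℝ)
    (y : Fin d → ℝ) (yb : Fin (p + 1) → (Fin d → ℝ)) (zb : Fin (q + 1) → (Fin d → ℝ))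
    (Ao Anew : Fin (n + 1) → ℝ) (σo σnew : ℝ)
    -- (a) deviations of the original modelling function on the original basis
    (hao : ∀ i, f (yb i) - (Ao 0 + ∑ k : Fin n, Ao k.succ * g k (yb i)) = σo)
    (hao' : ∀ j, f (zb j) - (Ao 0 + ∑ k : Fin n, Ao k.succ * g k (zb j)) = -σo)
    -- (b) deviations of the new modelling function on the new basis
    (hbn : f y - (Anew 0 + ∑ k : Fin n, Anew k.succ * g k y) = σnew)
    (hbn' : ∀ i, i ≠ 0 →
      f (yb i) - (Anew 0 + ∑ k : Fin n, Anew k.succ * g k (yb i)) = σnew)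
    (hbn'' : ∀ j, f (zb j) - (Anew 0 + ∑ k : Fin n, Anew k.succ * g k (zb j)) = -σnew)
    -- (c) the convex-combination relation on the new basis
    (α : ℝ) (tα : Fin (p + 1) → ℝ) (tβ : Fin (q + 1) → ℝ)
    (hα : 0 < α) (htα : ∀ i, i ≠ 0 → 0 ≤ tα i)
    (htαs : α + ∑ i ∈ Finset.univ.erase 0, tα i = 1)
    (htβ : ∀ j, 0 ≤ tβ j) (htβs : ∑ j, tβ j = 1)
    (hcomb : α • (Fin.cons 1 (fun k : Fin n => g k y) : Fin (n + 1) → ℝ)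
        + ∑ i ∈ Finset.univ.erase 0,
            tα i • (Fin.cons 1 (fun k : Fin n => g k (yb i)) : Fin (n + 1) → ℝ)
      = ∑ j, tβ j • (Fin.cons 1 (fun k : Fin n => g k (zb j)) : Fin (n + 1) → ℝ))
    -- (d) the new point has strictly larger deviation under `A_o`
    (hd2 : f y - (Ao 0 + ∑ k : Fin n, Ao k.succ * g k y) > σo) :
    σnew > σo := by
  -- pairing identity
  have key : ∀ A : Fin (n+1) → ℝ,
      α * (A 0 + ∑ k : Fin n, A k.succ * g k y)
        + ∑ i ∈ Finset.univ.erase 0,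
            tα i * (A 0 + ∑ k : Fin n, A k.succ * g k (yb i))
        = ∑ j, tβ j * (A 0 + ∑ k : Fin n, A k.succ * g k (zb j)) := by
    intro A
    have hpair : ∀ x : Fin d → ℝ,
        (∑ k : Fin (n+1),
            A k * (Fin.cons 1 (fun k : Fin n => g k x) : Fin (n+1) → ℝ) k)
          = A 0 + ∑ k : Fin n, A k.succ * g k x := by
      intro x
      rw [Fin.sum_univ_succ]
      simp
    have h := congrArg (fun v : Fin (n+1) → ℝ => ∑ k, A k * v k) hcomb
    rw [pair_sum_aux] at h
    have hL : (∑ k : Fin (n+1),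
        A k * (α • (Fin.cons 1 (fun k : Fin n => g k y) : Fin (n+1) → ℝ)
          + ∑ i ∈ Finset.univ.erase 0,
              tα i • (Fin.cons 1 (fun k : Fin n => g k (yb i)) : Fin (n+1) → ℝ)) k)
        = α * (∑ k : Fin (n+1),
              A k * (Fin.cons 1 (fun k : Fin n => g k y) : Fin (n+1) → ℝ) k)
          + ∑ i ∈ Finset.univ.erase 0,
              tα i * ∑ k : Fin (n+1),
                A k * (Fin.cons 1 (fun k : Fin n => g k (yb i)) : Fin (n+1) → ℝ) k := by
      simp only [Pi.add_apply, Pi.smul_apply, smul_eq_mul, mul_add,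
        Finset.sum_add_distrib]
      congr 1
      · rw [Finset.mul_sum]
        exact Finset.sum_congr rfl fun k _ => by ring
      · exact pair_sum_aux A _ _ _
    rw [hL] at h
    simp only [hpair] at h
    exact h
  -- evaluate with Anew and Ao
  have hnew := key Anew
  have hold := key Ao
  -- rewrite the modelled values via the deviation hypotheses
  have eys : ∀ i ∈ Finset.univ.erase (0 : Fin (p+1)),
      tα i * (Anew 0 + ∑ k : Fin n, Anew k.succ * g k (yb i))
        = tα i * (f (yb i) - σnew) := fun i hi => by
    have := hbn' i (Finset.ne_of_mem_erase hi); rw [show (Anew 0 + ∑ k : Fin n, Anew k.succ * g k (yb i)) = f (yb i) - σnew by linarith]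
  have eys' : ∀ i ∈ Finset.univ.erase (0 : Fin (p+1)),
      tα i * (Ao 0 + ∑ k : Fin n, Ao k.succ * g k (yb i))
        = tα i * (f (yb i) - σo) := fun i hi => by
    have := hao i; rw [show (Ao 0 + ∑ k : Fin n, Ao k.succ * g k (yb i)) = f (yb i) - σo by linarith]
  have ezs : ∀ j ∈ (Finset.univ : Finset (Fin (q+1))),
      tβ j * (Anew 0 + ∑ k : Fin n, Anew k.succ * g k (zb j))
        = tβ j * (f (zb j) + σnew) := fun j _ => by
    have := hbn'' j; rw [show (Anew 0 + ∑ k : Fin n, Anew k.succ * g k (zb j)) = f (zb j) + σnew by linarith]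
  have ezs' : ∀ j ∈ (Finset.univ : Finset (Fin (q+1))),
      tβ j * (Ao 0 + ∑ k : Fin n, Ao k.succ * g k (zb j))
        = tβ j * (f (zb j) + σo) := fun j _ => by
    have := hao' j; rw [show (Ao 0 + ∑ k : Fin n, Ao k.succ * g k (zb j)) = f (zb j) + σo by linarith]
  rw [Finset.sum_congr rfl eys, Finset.sum_congr rfl ezs,
    show (Anew 0 + ∑ k : Fin n, Anew k.succ * g k y) = f y - σnew by linarith] at hnew
  rw [Finset.sum_congr rfl eys', Finset.sum_congr rfl ezs'] at hold
  -- expand the constant parts of the sums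
  have exp1 : ∀ σ : ℝ, ∑ i ∈ Finset.univ.erase (0 : Fin (p+1)), tα i * (f (yb i) - σ)
      = (∑ i ∈ Finset.univ.erase 0, tα i * f (yb i))
        - (∑ i ∈ Finset.univ.erase 0, tα i) * σ := by
    intro σ
    rw [Finset.sum_mul, ← Finset.sum_sub_distrib]
    exact Finset.sum_congr rfl fun i _ => by ring
  have exp2 : ∀ σ : ℝ, ∑ j : Fin (q+1), tβ j * (f (zb j) + σ)
      = (∑ j, tβ j * f (zb j)) + (∑ j : Fin (q+1), tβ j) * σ := by
    intro σ
    rw [Finset.sum_mul, ← Finset.sum_add_distrib]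
    exact Finset.sum_congr rfl fun j _ => by ring
  rw [exp1, exp2, htβs] at hnew
  rw [exp1, exp2, htβs] at hold
  -- conclude by arithmetic
  have hLo : α * (Ao 0 + ∑ k : Fin n, Ao k.succ * g k y) < α * (f y - σo) :=
    mul_lt_mul_of_pos_left (by linarith) hα
  nlinarith [hnew, hold, htαs, hLo]
end
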